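/- arXiv:1307.6226 — 2 statements merged into one kernel-verified Lean document; each statement's English description precedes it below -/
import Mathlib

section
/- Fix n ≥ 3. Suppose for 1 ≤ i ≤ m we are given nontrivial subspaces Vᵢ, Wᵢ ⊆ 𝔽₂ⁿ with 𝔽₂ⁿ = Vᵢ ⊕ Wᵢ. Then there exists a linear map f : 𝔽₂ⁿ → 𝔽₂ such that the set {i : f|_{Vᵢ} ≠ 0 and f|_{Wᵢ} ≠ 0} has cardinality at least (3/7)·m. -/
/-! A functional `f` vanishes on `V` exactly when it lies in `V.dualAnnihilator`, a subspace of
the dual of size `2 ^ dim W`, and the annihilators of two complementary subspaces meet only in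
`0`. So for each `i` at least `2 ^ n - 2 ^ a - 2 ^ b + 1 ≥ 2 ^ (n - 1) - 1` functionals (where
`a + b = n`, `a, b ≥ 1`) are nonzero on both `Vᵢ` and `Wᵢ`, all of them nonzero. Averaging over
the `2 ^ n - 1` nonzero functionals yields one that works for a proportion
`(2 ^ (n - 1) - 1) / (2 ^ n - 1) ≥ 3 / 7` of the indices; averaging over all `2 ^ n`
functionals would not suffice when `n = 3`. -/

open Finset Module

theorem Nat.card_subtype_ne_add_one {α : Type*} [Finite α] (a : α) :
    Nat.card {x // x ≠ a} + 1 = Nat.card α := by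
  classical
  have := Fintype.ofFinite α
  simp only [Nat.card_eq_fintype_card, Fintype.card_subtype_compl, Fintype.card_unique]
  have := Fintype.card_pos_iff.mpr ⟨a⟩
  omega

theorem exists_mul_natCard_le_of_forall_le {α β : Type*} [Finite α] [Finite β] [Nonempty β]
    (r : α → β → Prop) {c : ℕ} (h : ∀ a, c ≤ Nat.card {b // r a b}) :
    ∃ b, c * Nat.card α ≤ Nat.card β * Nat.card {a // r a b} := by
  classical
  have := Fintype.ofFinite α
  have := Fintype.ofFinite β
  simp only [Nat.card_eq_fintype_card, Fintype.card_subtype] at h ⊢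
  have hsum : ∑ _b : β, c * Fintype.card α ≤ ∑ b : β, Fintype.card β * #{a | r a b} := by
    calc ∑ _b : β, c * Fintype.card α = Fintype.card β * ∑ _a : α, c := by
          simp [mul_comm, mul_left_comm]
      _ ≤ Fintype.card β * ∑ a : α, #{b | r a b} := by gcongr with a; exact h a
      _ = ∑ b : β, Fintype.card β * #{a | r a b} := by
          simp only [card_filter, ← mul_sum]
          rw [sum_comm]
  obtain ⟨b, -, hb⟩ := exists_le_of_sum_le univ_nonempty hsum
  exact ⟨b, hb⟩

theorem Submodule.natCard_notMem_and_notMem_add_of_disjoint {R M : Type*} [Ring R]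
    [AddCommGroup M] [Module R M] [Finite M] {A B : Submodule R M} (h : Disjoint A B) :
    Nat.card {x // x ∉ A ∧ x ∉ B} + Nat.card A + Nat.card B = Nat.card M + 1 := by
  classical
  have := Fintype.ofFinite M
  simp only [Nat.card_eq_fintype_card, Fintype.card_subtype]
  have hinter : #{x | x ∈ A ∧ x ∈ B} = 1 := by
    rw [card_eq_one]
    refine ⟨0, ?_⟩
    ext x
    simp [← Submodule.mem_inf, h.eq_bot]
  have hunion := card_union_add_card_inter (univ.filter (· ∈ A)) (univ.filter (· ∈ B))
  have hsplit := card_filter_add_card_filter_not (s := (univ : Finset M)) (fun x => x ∈ A ∨ x ∈ B)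
  rw [← filter_or, ← filter_and, hinter] at hunion
  simp only [not_or, card_univ] at hsplit
  omega

theorem Subspace.natCard_dual_nonvanishing_on_both_add {K E : Type*} [Field K] [Finite K]
    [AddCommGroup E] [Module K E] [FiniteDimensional K E] {V W : Subspace K E}
    (h : IsCompl V W) :
    Nat.card {f : Module.Dual K E // (∃ x ∈ V, f x ≠ 0) ∧ (∃ x ∈ W, f x ≠ 0)} +
        Nat.card K ^ finrank K W + Nat.card K ^ finrank K V =
      Nat.card K ^ finrank K E + 1 := by
  have hdim := Submodule.finrank_add_eq_of_isCompl h
  have hcard_ann (U : Subspace K E) :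
      Nat.card U.dualAnnihilator = Nat.card K ^ (finrank K E - finrank K U) := by
    rw [natCard_eq_pow_finrank (K := K), ← U.finrank_add_finrank_dualAnnihilator_eq,
      Nat.add_sub_cancel_left]
  have : Finite (Module.Dual K E) := Module.finite_of_finite K
  have hcount := Submodule.natCard_notMem_and_notMem_add_of_disjoint
    (Subspace.isCompl_dualAnnihilator h).disjoint
  rw [hcard_ann, hcard_ann, natCard_eq_pow_finrank (K := K) (V := Module.Dual K E),
    Subspace.dual_finrank_eq, show finrank K E - finrank K V = finrank K W by omega,
    show finrank K E - finrank K W = finrank K V by omega] at hcount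
  simpa only [Submodule.mem_dualAnnihilator, not_forall, exists_prop] using hcount

theorem Module.natCard_dual_ne_zero_add_one (K E : Type*) [Field K] [Finite K] [AddCommGroup E]
    [Module K E] [FiniteDimensional K E] :
    Nat.card {f : Module.Dual K E // f ≠ 0} + 1 = Nat.card K ^ finrank K E := by
  have : Finite (Module.Dual K E) := Module.finite_of_finite K
  rw [Nat.card_subtype_ne_add_one, natCard_eq_pow_finrank (K := K), Subspace.dual_finrank_eq]

theorem two_pow_add_two_pow_le {a b : ℕ} (ha : 1 ≤ a) (hb : 1 ≤ b) :
    2 ^ a + 2 ^ b ≤ 2 ^ (a + b - 1) + 2 := by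
  obtain ⟨a, rfl⟩ := Nat.exists_eq_add_of_le' ha
  obtain ⟨b, rfl⟩ := Nat.exists_eq_add_of_le' hb
  rw [show a + 1 + (b + 1) - 1 = a + b + 1 by omega, pow_succ, pow_succ, pow_succ, pow_add]
  nlinarith [Nat.one_le_two_pow (n := a), Nat.one_le_two_pow (n := b)]

theorem Subspace.two_pow_finrank_sub_one_le_natCard_dual_nonvanishing_on_both_add_one
    {E : Type*} [AddCommGroup E] [Module (ZMod 2) E] [FiniteDimensional (ZMod 2) E]
    {V W : Subspace (ZMod 2) E} (hV : V ≠ ⊥) (hW : W ≠ ⊥) (h : IsCompl V W) :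
    2 ^ (finrank (ZMod 2) E - 1) ≤
      Nat.card {f : Module.Dual (ZMod 2) E // (∃ x ∈ V, f x ≠ 0) ∧ (∃ x ∈ W, f x ≠ 0)} + 1 := by
  have hcount := Subspace.natCard_dual_nonvanishing_on_both_add h
  have hdim := Submodule.finrank_add_eq_of_isCompl h
  have hVpos : 1 ≤ finrank (ZMod 2) V := Submodule.one_le_finrank_iff.mpr hV
  have hWpos : 1 ≤ finrank (ZMod 2) W := Submodule.one_le_finrank_iff.mpr hW
  have hpow := two_pow_add_two_pow_le hVpos hWpos
  have hhalf : 2 ^ (finrank (ZMod 2) E) = 2 * 2 ^ (finrank (ZMod 2) E - 1) := by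
    rw [← pow_succ']
    congr 1
    omega
  rw [Nat.card_zmod] at hcount
  rw [hdim] at hpow
  omega

theorem three_mul_le_seven_mul {N m k : ℕ} (hN : 4 ≤ N) (h : (N - 1) * m ≤ (2 * N - 1) * k) :
    3 * m ≤ 7 * k := by
  have hratio : 3 * (2 * N - 1) ≤ 7 * (N - 1) := by omega
  refine Nat.le_of_mul_le_mul_left ?_ (show 0 < 2 * N - 1 by omega)
  calc (2 * N - 1) * (3 * m) = 3 * (2 * N - 1) * m := by ring
    _ ≤ 7 * (N - 1) * m := by gcongr
    _ = 7 * ((N - 1) * m) := by ring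
    _ ≤ 7 * ((2 * N - 1) * k) := by gcongr
    _ = (2 * N - 1) * (7 * k) := by ring

theorem stmt_2 (n m : ℕ) (hn : n ≥ 3)
    (V W : Fin m → Submodule (ZMod 2) (Fin n → ZMod 2))
    (hV : ∀ i, V i ≠ ⊥) (hW : ∀ i, W i ≠ ⊥)
    (hcompl : ∀ i, IsCompl (V i) (W i)) :
    ∃ f : (Fin n → ZMod 2) →ₗ[ZMod 2] ZMod 2,
      7 * Nat.card {i : Fin m //
          (∃ x ∈ V i, f x ≠ 0) ∧ (∃ x ∈ W i, f x ≠ 0)} ≥ 3 * m := by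
  have : Finite (Module.Dual (ZMod 2) (Fin n → ZMod 2)) := Module.finite_of_finite (ZMod 2)
  have hdim : finrank (ZMod 2) (Fin n → ZMod 2) = n := finrank_fin_fun _
  have hN : 2 ^ 2 ≤ 2 ^ (n - 1) := Nat.pow_le_pow_right two_pos (by omega)
  have hnonzero : Nat.card {f : Module.Dual (ZMod 2) (Fin n → ZMod 2) // f ≠ 0} + 1 =
      2 * 2 ^ (n - 1) := by
    rw [Module.natCard_dual_ne_zero_add_one, hdim, Nat.card_zmod, ← pow_succ']
    congr 1
    omega
  have : Nonempty {f : Module.Dual (ZMod 2) (Fin n → ZMod 2) // f ≠ 0} :=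
    (Nat.card_pos_iff.mp (by omega)).1
  have hgood (i : Fin m) : 2 ^ (n - 1) - 1 ≤
      Nat.card {f : {f : Module.Dual (ZMod 2) (Fin n → ZMod 2) // f ≠ 0} //
        (∃ x ∈ V i, f.1 x ≠ 0) ∧ (∃ x ∈ W i, f.1 x ≠ 0)} := by
    have hne_zero {f : Module.Dual (ZMod 2) (Fin n → ZMod 2)}
        (hf : (∃ x ∈ V i, f x ≠ 0) ∧ (∃ x ∈ W i, f x ≠ 0)) : f ≠ 0 := by
      rintro rfl
      simp at hf
    have := Subspace.two_pow_finrank_sub_one_le_natCard_dual_nonvanishing_on_both_add_one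
      (hV i) (hW i) (hcompl i)
    rw [hdim, ← Nat.card_congr (Equiv.subtypeSubtypeEquivSubtype hne_zero)] at this
    omega
  obtain ⟨⟨f, _⟩, hf⟩ := exists_mul_natCard_le_of_forall_le _ hgood
  refine ⟨f, three_mul_le_seven_mul hN ?_⟩
  rwa [Nat.card_fin, show Nat.card {f : Module.Dual (ZMod 2) (Fin n → ZMod 2) // f ≠ 0} =
    2 * 2 ^ (n - 1) - 1 by omega] at hf
end

section
/- Let Γ_k ⊴ Γ_{k−1} ⊴ ⋯ ⊴ Γ₀ be a chain of groups with each [Γᵢ : Γ_{i+1}] = 2 for 0 ≤ i < k. Then there exists a subgroup Γ′ ≤ Γ_k with Γ′ ⊴ Γ₀ and [Γ₀ : Γ′] = 2^ℓ for some ℓ ≤ 2^k − 1. -/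
/-!
Induct on `k`. The chain `Γ 1 ≥ ⋯ ≥ Γ (k + 1)` yields `Δ ≤ Γ (k + 1)`, normal in `Γ 1` of index
`2 ^ ℓ` with `ℓ ≤ 2 ^ k - 1`. Pick `g ∈ Γ 0 \ Γ 1`. Since `[Γ 0 : Γ 1] = 2`, the only
`Γ 0`-conjugates of `Δ` are `Δ` and `g Δ g⁻¹`, so `Δ ⊓ g Δ g⁻¹` is normal in `Γ 0`; and
`[Δ : Δ ⊓ g Δ g⁻¹]` divides `[Γ 1 : g Δ g⁻¹] = 2 ^ ℓ`. Hence `[Γ 0 : Δ ⊓ g Δ g⁻¹] = 2 ^ m` with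
`m ≤ 2 ℓ + 1 ≤ 2 ^ (k + 1) - 1`.

Normality of `D` inside a larger subgroup `H` is expressed as `H ≤ normalizer D`, so that the
whole argument takes place in the ambient group.
-/

open ConjAct
open scoped Pointwise

namespace Subgroup

variable {G : Type*} [Group G] {H N D : Subgroup G}

theorem relIndex_dvd_relIndex_of_le_normalizer {K L : Subgroup G} (hHL : H ≤ L) (hKL : K ≤ L)
    (hL : L ≤ normalizer H) : H.relIndex K ∣ H.relIndex L := by
  have : (H.subgroupOf L).Normal := (normal_subgroupOf_iff_le_normalizer hHL).mpr hL
  rw [← relIndex_subgroupOf hKL]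
  exact relIndex_dvd_index_of_normal _ _

theorem mul_mem_of_relIndex_eq_two (hN : N.relIndex H = 2) {a b : G} (ha : a ∈ H) (hb : b ∈ H)
    (haN : a ∉ N) (hbN : b ∉ N) : a * b ∈ N := by
  have := (mul_mem_iff_of_index_two hN (a := ⟨a, ha⟩) (b := ⟨b, hb⟩)).mpr
  simp only [mem_subgroupOf] at this
  exact this (iff_of_false haN hbN)

theorem exists_mem_notMem_of_relIndex_eq_two (hN : N.relIndex H = 2) : ∃ g ∈ H, g ∉ N := by
  by_contra! hHN
  have := relIndex_eq_one.mpr hHN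
  omega

theorem conjAct_mul_smul_eq_of_mem (hND : N ≤ normalizer D) (a : G) {y : G} (hy : y ∈ N) :
    toConjAct (a * y) • D = toConjAct a • D := by
  rw [map_mul, mul_smul, conjAct_pointwise_smul_eq_self (hND hy)]

theorem le_normalizer_conjAct_smul (hHN : H ≤ normalizer N) (hND : N ≤ normalizer D) {g : G}
    (hg : g ∈ H) : N ≤ normalizer (toConjAct g • D : Subgroup G) := by
  intro x hx
  have hconj : g⁻¹ * x * g ∈ N := (mem_normalizer_iff''.mp (hHN hg) x).mp hx
  rw [← conjAct_pointwise_smul_iff, ← mul_smul, ← map_mul,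
    ← conjAct_mul_smul_eq_of_mem hND g hconj]
  group

theorem le_normalizer_inf_conjAct_smul (hHN : H ≤ normalizer N) (hN : N.relIndex H = 2)
    (hND : N ≤ normalizer D) {g : G} (hg : g ∈ H) (hgN : g ∉ N) :
    H ≤ normalizer (D ⊓ toConjAct g • D : Subgroup G) := by
  intro x hx
  by_cases hxN : x ∈ N
  · exact inf_normalizer_le_normalizer_inf ⟨hND hxN, le_normalizer_conjAct_smul hHN hND hg hxN⟩
  have hgx : g⁻¹ * x ∈ N :=
    mul_mem_of_relIndex_eq_two hN (inv_mem hg) hx (fun h => hgN (by simpa using inv_mem h)) hxN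
  have hxg : x * g ∈ N := mul_mem_of_relIndex_eq_two hN hx hg hxN hgN
  rw [← conjAct_pointwise_smul_iff, smul_inf, ← mul_smul, ← map_mul,
    ← conjAct_mul_smul_eq_of_mem hND g hgx, ← one_mul (x * g),
    conjAct_mul_smul_eq_of_mem hND 1 hxg, map_one, one_smul, inf_comm]
  group

theorem exists_le_le_normalizer_relIndex_eq_two_pow (hNH : N ≤ H) (hHN : H ≤ normalizer N)
    (hN : N.relIndex H = 2) (hDN : D ≤ N) (hND : N ≤ normalizer D) {ℓ : ℕ}
    (hD : D.relIndex N = 2 ^ ℓ) :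
    ∃ D' ≤ D, D' ≤ H ∧ H ≤ normalizer D' ∧ ∃ m ≤ 2 * ℓ + 1, D'.relIndex H = 2 ^ m := by
  have hDH : D ≤ H := hDN.trans hNH
  obtain ⟨g, hg, hgN⟩ := exists_mem_notMem_of_relIndex_eq_two hN
  set K := toConjAct g • D
  have hgN_eq : toConjAct g • N = N := conjAct_pointwise_smul_eq_self (hHN hg)
  have hKN : K ≤ N := hgN_eq ▸ pointwise_smul_le_pointwise_smul_iff.mpr hDN
  have hKN_idx : K.relIndex N = 2 ^ ℓ := by
    rw [← hgN_eq, relIndex_pointwise_smul, hD]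
  have hKD : K.relIndex D ∣ 2 ^ ℓ := hKN_idx ▸
    relIndex_dvd_relIndex_of_le_normalizer hKN hDN (le_normalizer_conjAct_smul hHN hND hg)
  obtain ⟨j, hjℓ, hj⟩ := (Nat.dvd_prime_pow Nat.prime_two).mp hKD
  refine ⟨D ⊓ K, inf_le_left, inf_le_left.trans hDH,
    le_normalizer_inf_conjAct_smul hHN hN hND hg hgN, j + ℓ + 1, by omega, ?_⟩
  rw [← relIndex_mul_relIndex _ _ _ inf_le_left hDH, ← relIndex_mul_relIndex _ _ _ hDN hNH,
    inf_relIndex_left, hj, hD, hN]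
  ring

theorem exists_le_le_normalizer_relIndex_eq_two_pow_of_chain {k : ℕ} {Γ : ℕ → Subgroup G}
    (hle : ∀ i < k, Γ (i + 1) ≤ Γ i) (hnorm : ∀ i < k, Γ i ≤ normalizer (Γ (i + 1)))
    (hidx : ∀ i < k, (Γ (i + 1)).relIndex (Γ i) = 2) :
    ∃ Γ' ≤ Γ k, Γ' ≤ Γ 0 ∧ Γ 0 ≤ normalizer Γ' ∧
      ∃ ℓ ≤ 2 ^ k - 1, Γ'.relIndex (Γ 0) = 2 ^ ℓ := by
  induction k generalizing Γ with
  | zero => exact ⟨Γ 0, le_rfl, le_rfl, le_normalizer, 0, le_rfl, by simp⟩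
  | succ k ih =>
    obtain ⟨Δ, hΔk, hΔ1, hΔn, ℓ, hℓ, hΔi⟩ := ih (Γ := fun i => Γ (i + 1))
      (fun i hi => hle (i + 1) (by omega)) (fun i hi => hnorm (i + 1) (by omega))
      (fun i hi => hidx (i + 1) (by omega))
    obtain ⟨Γ', hΓ'Δ, hΓ'0, hΓ'n, m, hm, hΓ'i⟩ := exists_le_le_normalizer_relIndex_eq_two_pow
      (hle 0 k.succ_pos) (hnorm 0 k.succ_pos) (hidx 0 k.succ_pos) hΔ1 hΔn hΔi
    have : 1 ≤ 2 ^ k := Nat.one_le_two_pow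
    exact ⟨Γ', hΓ'Δ.trans hΔk, hΓ'0, hΓ'n, m, by rw [pow_succ]; omega, hΓ'i⟩

end Subgroup

theorem stmt_7 (G : Type*) [Group G] (k : ℕ) (Γ : ℕ → Subgroup G)
    (hle : ∀ i < k, Γ (i + 1) ≤ Γ i)
    (hnorm : ∀ i < k, ((Γ (i + 1)).subgroupOf (Γ i)).Normal)
    (hidx : ∀ i < k, ((Γ (i + 1)).subgroupOf (Γ i)).index = 2) :
    ∃ Γ' : Subgroup G, Γ' ≤ Γ k ∧ Γ' ≤ Γ 0 ∧
      (Γ'.subgroupOf (Γ 0)).Normal ∧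
      ∃ ℓ : ℕ, ℓ ≤ 2 ^ k - 1 ∧ (Γ'.subgroupOf (Γ 0)).index = 2 ^ ℓ := by
  obtain ⟨Γ', hΓ'k, hΓ'0, hΓ'n, hindex⟩ :=
    Subgroup.exists_le_le_normalizer_relIndex_eq_two_pow_of_chain hle
      (fun i hi => (Subgroup.normal_subgroupOf_iff_le_normalizer (hle i hi)).mp (hnorm i hi)) hidx
  exact ⟨Γ', hΓ'k, hΓ'0, (Subgroup.normal_subgroupOf_iff_le_normalizer hΓ'0).mpr hΓ'n, hindex⟩
end
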